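/- If the rotor configuration ρ' is obtained from the rotor configuration ρ by pushing a cycle of ρ, then ρ' ≡ ρ. -/

import Mathlib

open Function

/-- A strongly connected finite directed multigraph (self-loops and multiple arcs
allowed), given by source and head maps `src, head : E → V`, together with a nonempty
target set `T` and a rotor mechanism at each vertex: `next` is a cyclic ordering of
the arcs emanating from each vertex (it permutes the arcs, preserves the source, and
acts transitively on the arcs emanating from any fixed vertex). -/
structure RotorSystem (V E : Type) [Fintype V] [DecidableEq V] [Fintype E]
    [DecidableEq E] where
  src : E → V
  head : E → V
  T : Finset V
  T_nonempty : T.Nonempty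
  strongly_connected : ∀ v w : V,
    Relation.ReflTransGen (fun a b => ∃ e : E, src e = a ∧ head e = b) v w
  next : E → E
  next_src : ∀ e, src (next e) = src e
  next_bijective : Function.Bijective next
  next_cyclic : ∀ e e', src e = src e' → ∃ k : ℕ, next^[k] e = e'

namespace RotorSystem

variable {V E : Type} [Fintype V] [DecidableEq V] [Fintype E] [DecidableEq E]

/-- The set `V₀ = V - T` of non-target vertices. -/
abbrev V0 (S : RotorSystem V E) : Type := {v : V // v ∉ S.T}

/-- A rotor configuration: each non-target vertex carries an arc emanating from it. -/
abbrev RConf (S : RotorSystem V E) : Type :=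
  {ρ : S.V0 → E // ∀ v : S.V0, S.src (ρ v) = v.1}

/-- A particle configuration: a number of particles at each non-target vertex. -/
abbrev PConf (S : RotorSystem V E) : Type := S.V0 → ℕ

variable (S : RotorSystem V E)

/-- One step of a single particle's rotor walk: at a non-target vertex the rotor is
first progressed and the particle then moves along the new rotor arc; target vertices
absorb the particle. -/
def step (p : V × S.RConf) : V × S.RConf :=
  if h : p.1 ∈ S.T then p
  else
    (S.head (S.next (p.2.1 ⟨p.1, h⟩)),
      ⟨Function.update p.2.1 ⟨p.1, h⟩ (S.next (p.2.1 ⟨p.1, h⟩)), by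
        intro w
        rcases eq_or_ne w ⟨p.1, h⟩ with rfl | hw
        · rw [Function.update_self, S.next_src]
          exact p.2.2 ⟨p.1, h⟩
        · rw [Function.update_of_ne hw]
          exact p.2.2 w⟩)

open Classical in
/-- Route a single particle from `x` by rotor walk until it first reaches the target
set; the result is the pair (final position, final rotor configuration). -/
noncomputable def route (x : V) (ρ : S.RConf) : V × S.RConf :=
  if h : ∃ n, (S.step^[n] (x, ρ)).1 ∈ S.T then S.step^[Nat.find h] (x, ρ) else (x, ρ)

/-- `t_x(ρ)`: the target vertex reached by a single particle started at `x` with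
initial rotor configuration `ρ`. -/
noncomputable def tgt (x : V) (ρ : S.RConf) : V := (S.route x ρ).1

/-- The particle addition operator `E_v`: add one particle at `v` and route it to the
target set. -/
noncomputable def addAt (v : S.V0) (ρ : S.RConf) : S.RConf := (S.route v.1 ρ).2

/-- The action `σρ` of a particle configuration on a rotor configuration: place
`σ v` particles at each vertex `v` and route them all to the target set. -/
noncomputable def act (σ : S.PConf) (ρ : S.RConf) : S.RConf :=
  (Finset.univ : Finset S.V0).toList.foldr (fun v r => (S.addAt v)^[σ v] r) ρ

/-- Equivalence of rotor configurations: `ρ ≡ ρ'` iff `σρ = σρ'` for some particle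
configuration `σ`. -/
def REquiv (ρ ρ' : S.RConf) : Prop := ∃ σ : S.PConf, S.act σ ρ = S.act σ ρ'

/-- The outdegree `d(v)`. -/
def outdeg (v : V) : ℕ := (Finset.univ.filter fun e : E => S.src e = v).card

/-- The number `d(v,w)` of arcs from `v` to `w`. -/
def numArcs (v w : V) : ℕ :=
  (Finset.univ.filter fun e : E => S.src e = v ∧ S.head e = w).card

/-- A particle configuration is stable if every non-target vertex holds at most
`d(v) - 1` particles. -/
def IsStable (σ : S.PConf) : Prop := ∀ v : S.V0, σ v < S.outdeg v.1

/-- Parallel toppling: every unstable vertex topples once, sending one particle along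
each arc emanating from it. -/
def toppleStep (σ : S.PConf) : S.PConf := fun v =>
  (if S.outdeg v.1 ≤ σ v then σ v - S.outdeg v.1 else σ v) +
    ∑ w : S.V0, (if S.outdeg w.1 ≤ σ w then S.numArcs w.1 v.1 else 0)

open Classical in
/-- The stabilization `σ°` of a particle configuration. -/
noncomputable def stabilize (σ : S.PConf) : S.PConf :=
  if h : ∃ n, S.IsStable (S.toppleStep^[n] σ) then S.toppleStep^[Nat.find h] σ else σ

/-- A stable particle configuration is recurrent if it is reachable (by adding
particles and stabilizing) from every particle configuration.  The recurrent
configurations form the sandpile group `S(G/T)` under addition-then-stabilization. -/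
def IsRecurrent (τ : S.PConf) : Prop :=
  S.IsStable τ ∧ ∀ σ : S.PConf, ∃ τ' : S.PConf, τ = S.stabilize (τ' + σ)

/-- `e` is the identity element of the sandpile group `S(G/T)`. -/
def IsSandpileIdentity (e : S.PConf) : Prop :=
  S.IsRecurrent e ∧ ∀ τ : S.PConf, S.IsRecurrent τ → S.stabilize (e + τ) = τ

/-- The rotor arcs of `ρ`, as a relation on vertices. -/
def rotorRel (ρ : S.RConf) (a b : V) : Prop :=
  ∃ h : a ∉ S.T, S.head (ρ.1 ⟨a, h⟩) = b

/-- A rotor configuration is acyclic if its rotor arcs contain no directed cycle. -/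
def IsAcyclicConf (ρ : S.RConf) : Prop :=
  ∀ v : V, ¬ Relation.TransGen (S.rotorRel ρ) v v

/-- `ρ'` is obtained from `ρ` by pushing a cycle: there are distinct non-target
vertices `v_0, …, v_{r-1}` with the rotor arc of `v_j` pointing to `v_{j+1}`
(cyclically); each such rotor is regressed one step, other rotors are unchanged. -/
def IsCyclePush (ρ ρ' : S.RConf) : Prop :=
  ∃ r : ℕ, 0 < r ∧ ∃ f : ZMod r → S.V0, Function.Injective f ∧
    (∀ j : ZMod r, S.head (ρ.1 (f j)) = (f (j + 1)).1) ∧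
    (∀ j : ZMod r, S.next (ρ'.1 (f j)) = ρ.1 (f j)) ∧
    (∀ v : S.V0, v ∉ Set.range f → ρ'.1 v = ρ.1 v)

end RotorSystem

/-!
Add one particle at the first vertex `v₀` of the cycle to `ρ'`. Each rotor of the cycle
is one step behind its rotor in `ρ`, so the particle advances it back and then follows it
to the next cycle vertex: after one lap it is at `v₀` again and the rotors form `ρ`. From
then on its walk is the walk of a particle added at `v₀` to `ρ`, so both stop at the same
target with the same rotors, i.e. `E_{v₀} ρ' = E_{v₀} ρ`.

This needs every rotor walk to reach `T` (`route` returns its input for a walk that never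
does). If a walk avoided `T`, some vertex would be visited infinitely often; its rotor
then runs through all its arcs infinitely often, so every out-neighbour, and by strong
connectivity every vertex, including those of `T`, would be visited infinitely often.
-/

theorem List.foldr_iterate_eq_self {α β : Type*} (f : α → β → β) (σ : α → ℕ) (b : β) :
    ∀ L : List α, (∀ a ∈ L, σ a = 0) → L.foldr (fun a c => (f a)^[σ a] c) b = b
  | [], _ => rfl
  | a :: L, hL => by
    rw [foldr_cons, foldr_iterate_eq_self f σ b L fun a' ha' => hL a' (by simp [ha']),
      hL a mem_cons_self, iterate_zero_apply]

namespace RotorSystem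

variable {V E : Type} [Fintype V] [DecidableEq V] [Fintype E] [DecidableEq E]
  (S : RotorSystem V E)

theorem src_iterate_next (k : ℕ) (e : E) : S.src (S.next^[k] e) = S.src e := by
  induction k with
  | zero => rfl
  | succ k ih => rw [iterate_succ_apply', S.next_src, ih]

theorem exists_le_iterate_next_eq (M : ℕ) {e e' : E} (h : S.src e = S.src e') :
    ∃ k, M ≤ k ∧ S.next^[k] e = e' := by
  obtain ⟨k, hk⟩ := S.next_cyclic (S.next^[M] e) e' (by rw [src_iterate_next, h])
  exact ⟨k + M, Nat.le_add_left M k, by rw [iterate_add_apply, hk]⟩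

theorem step_fst_of_eq {p : V × S.RConf} {v : S.V0} (hv : p.1 = v.1) :
    (S.step p).1 = S.head (S.next (p.2.1 v)) := by
  obtain ⟨x, ρ⟩ := p
  obtain ⟨v, hvT⟩ := v
  subst hv
  rw [step, dif_neg hvT]

theorem step_snd_apply (p : V × S.RConf) (v : S.V0) :
    (S.step p).2.1 v = if p.1 = v.1 then S.next (p.2.1 v) else p.2.1 v := by
  unfold step
  split_ifs with hT hv hv
  · exact absurd (hv ▸ hT) v.2
  · rfl
  · obtain rfl : v = ⟨p.1, hT⟩ := Subtype.ext hv.symm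
    exact update_self ..
  · exact update_of_ne (fun h => hv (congrArg Subtype.val h).symm) ..

theorem iterate_step_snd_apply (x : V) (ρ : S.RConf) (v : S.V0) (n : ℕ) :
    (S.step^[n] (x, ρ)).2.1 v =
      S.next^[Nat.count (fun i => (S.step^[i] (x, ρ)).1 = v.1) n] (ρ.1 v) := by
  induction n with
  | zero => rfl
  | succ n ih =>
    rw [iterate_succ_apply', step_snd_apply, ih, Nat.count_succ]
    split_ifs <;> simp only [iterate_succ_apply', add_zero]

def visits (x : V) (ρ : S.RConf) (w : V) : Set ℕ := {n | (S.step^[n] (x, ρ)).1 = w}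

theorem infinite_visits_head {x : V} {ρ : S.RConf} {v : S.V0}
    (hv : (S.visits x ρ v.1).Infinite) {e : E} (he : S.src e = v.1) :
    (S.visits x ρ (S.head e)).Infinite := by
  refine Nat.frequently_atTop_iff_infinite.mp (Filter.frequently_atTop.mpr fun N => ?_)
  obtain ⟨k, hNk, hk⟩ := S.exists_le_iterate_next_eq (N + 1) (e := ρ.1 v) (e' := e)
    (by rw [ρ.2, he])
  obtain ⟨j, rfl⟩ : ∃ j, k = j + 1 := ⟨k - 1, by omega⟩
  set P := fun i => (S.step^[i] (x, ρ)).1 = v.1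
  have hvisit : P (Nat.nth P j) := Nat.nth_mem_of_infinite hv j
  have hj : j ≤ Nat.nth P j := (Nat.nth_strictMono hv).id_le j
  refine ⟨Nat.nth P j + 1, by omega, ?_⟩
  rw [iterate_succ_apply', S.step_fst_of_eq hvisit, iterate_step_snd_apply,
    Nat.count_nth_of_infinite hv, ← iterate_succ_apply' S.next, hk]

theorem exists_iterate_step_mem_T (x : V) (ρ : S.RConf) :
    ∃ n, (S.step^[n] (x, ρ)).1 ∈ S.T := by
  by_contra! hwalk
  have not_mem_of_infinite : ∀ w, (S.visits x ρ w).Infinite → w ∉ S.T :=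
    fun w hw => by
      obtain ⟨n, hn⟩ := hw.nonempty
      exact hn ▸ hwalk n
  obtain ⟨v₀, hv₀⟩ := Finite.exists_infinite_fiber (fun n => (S.step^[n] (x, ρ)).1)
  have reachable_infinite : ∀ w, Relation.ReflTransGen
      (fun a b => ∃ e : E, S.src e = a ∧ S.head e = b) v₀ w →
      (S.visits x ρ w).Infinite := by
    intro w hw
    induction hw with
    | refl => exact Set.infinite_coe_iff.mp hv₀
    | tail _ hbc ih =>
      obtain ⟨e, he, rfl⟩ := hbc
      exact S.infinite_visits_head (v := ⟨_, not_mem_of_infinite _ ih⟩) ih he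
  obtain ⟨t, ht⟩ := S.T_nonempty
  exact not_mem_of_infinite t (reachable_infinite t (S.strongly_connected v₀ t)) ht

theorem route_eq_of_iterate_step {x : V} {ρ₁ ρ₂ : S.RConf} {r : ℕ}
    (hr : S.step^[r] (x, ρ₁) = (x, ρ₂)) (hmid : ∀ j < r, (S.step^[j] (x, ρ₁)).1 ∉ S.T) :
    S.route x ρ₁ = S.route x ρ₂ := by
  classical
  have hshift : ∀ n, S.step^[n + r] (x, ρ₁) = S.step^[n] (x, ρ₂) := fun n => by
    rw [iterate_add_apply, hr]
  have h₁ := S.exists_iterate_step_mem_T x ρ₁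
  have h₂ := S.exists_iterate_step_mem_T x ρ₂
  have h₂' : ∃ n, (S.step^[n + r] (x, ρ₁)).1 ∈ S.T := by simpa only [hshift] using h₂
  have hle : r ≤ Nat.find h₁ := not_lt.mp fun hlt => hmid _ hlt (Nat.find_spec h₁)
  have hfind : Nat.find h₂' = Nat.find h₂ := by simp only [hshift]
  rw [route, route, dif_pos h₁, dif_pos h₂, ← Nat.find_add (hₘ := h₂') hle, hfind, hshift]

theorem act_single (v : S.V0) (ρ : S.RConf) : S.act (Pi.single v 1) ρ = S.addAt v ρ := by
  obtain ⟨l₁, l₂, hL⟩ := List.append_of_mem (Finset.mem_toList.mpr (Finset.mem_univ v))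
  have hv : v ∉ l₁ ++ l₂ := by
    have := hL ▸ Finset.nodup_toList (Finset.univ : Finset S.V0)
    exact (List.nodup_cons.mp (List.nodup_middle.mp this)).1
  have hzero : ∀ w ∈ l₁ ++ l₂, (Pi.single v 1 : S.PConf) w = 0 := fun w hw =>
    Pi.single_eq_of_ne (ne_of_mem_of_not_mem hw hv) 1
  rw [act, hL, List.foldr_append, List.foldr_cons,
    List.foldr_iterate_eq_self _ _ _ l₂ fun w hw => hzero w (List.mem_append_right l₁ hw),
    Pi.single_eq_same, iterate_one,
    List.foldr_iterate_eq_self _ _ _ l₁ fun w hw => hzero w (List.mem_append_left l₂ hw)]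

def piecewise (s : Finset S.V0) (ρ ρ' : S.RConf) : S.RConf :=
  ⟨s.piecewise ρ.1 ρ'.1, fun v => by by_cases hv : v ∈ s <;> simp [hv, ρ.2, ρ'.2]⟩

@[simp]
theorem piecewise_empty (ρ ρ' : S.RConf) : S.piecewise ∅ ρ ρ' = ρ' :=
  Subtype.ext (Finset.piecewise_empty ρ.1 ρ'.1)

theorem piecewise_eq_left {s : Finset S.V0} {ρ ρ' : S.RConf}
    (h : ∀ v ∉ s, ρ'.1 v = ρ.1 v) : S.piecewise s ρ ρ' = ρ :=
  Subtype.ext (funext fun v => by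
    by_cases hv : v ∈ s <;> simp [piecewise, hv, h])

theorem step_piecewise {s : Finset S.V0} {ρ ρ' : S.RConf} {v : S.V0} (hv : v ∉ s)
    (hnext : S.next (ρ'.1 v) = ρ.1 v) :
    S.step (v.1, S.piecewise s ρ ρ') = (S.head (ρ.1 v), S.piecewise (insert v s) ρ ρ') := by
  refine Prod.ext ?_ (Subtype.ext (funext fun w => ?_))
  · rw [S.step_fst_of_eq rfl]
    simp [piecewise, hv, hnext]
  · rw [step_snd_apply]
    by_cases hw : w = v
    · subst hw
      simp [piecewise, hv, hnext]
    · simp [piecewise, hw, Subtype.val_inj, Ne.symm hw, Finset.piecewise_insert_of_ne]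

theorem iterate_step_around_cycle {r : ℕ} {f : ZMod r → S.V0} {ρ ρ' : S.RConf}
    (hinj : Injective f) (hcyc : ∀ j : ZMod r, S.head (ρ.1 (f j)) = (f (j + 1)).1)
    (hpush : ∀ j : ZMod r, S.next (ρ'.1 (f j)) = ρ.1 (f j)) :
    ∀ j ≤ r, S.step^[j] ((f 0).1, ρ') =
      ((f j).1, S.piecewise ((Finset.range j).image fun i : ℕ => f i) ρ ρ')
  | 0, _ => by
    rw [iterate_zero_apply, Nat.cast_zero, Finset.range_zero, Finset.image_empty,
      piecewise_empty]
  | j + 1, hj => by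
    have hfresh : f j ∉ (Finset.range j).image fun i : ℕ => f i := by
      simp only [Finset.mem_image, Finset.mem_range, not_exists, not_and]
      intro i hi hij
      have := (ZMod.natCast_eq_natCast_iff' i j r).mp (hinj hij)
      rw [Nat.mod_eq_of_lt (by omega), Nat.mod_eq_of_lt (by omega)] at this
      omega
    rw [iterate_succ_apply', iterate_step_around_cycle hinj hcyc hpush j (by omega),
      S.step_piecewise hfresh (hpush j), hcyc, Finset.range_add_one, Finset.image_insert,
      Nat.cast_succ]

end RotorSystem

/-- **Lemma (cycle pushing preserves the equivalence class).**
If `ρ'` is obtained from `ρ` by pushing a cycle of `ρ`, then `ρ' ≡ ρ`. -/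
theorem cyclePush_requiv {V E : Type} [Fintype V] [DecidableEq V] [Fintype E]
    [DecidableEq E] (S : RotorSystem V E)
    (ρ ρ' : S.RConf) (h : S.IsCyclePush ρ ρ') :
    S.REquiv ρ' ρ := by
  obtain ⟨r, hr, f, hinj, hcyc, hpush, hout⟩ := h
  have : NeZero r := ⟨hr.ne'⟩
  have hwalk := S.iterate_step_around_cycle hinj hcyc hpush
  have hreturn : S.step^[r] ((f 0).1, ρ') = ((f 0).1, ρ) := by
    rw [hwalk r le_rfl, ZMod.natCast_self, S.piecewise_eq_left]
    refine fun v hv => hout v ?_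
    rintro ⟨k, rfl⟩
    exact hv (Finset.mem_image.mpr ⟨k.val, Finset.mem_range.mpr k.val_lt, by simp⟩)
  refine ⟨Pi.single (f 0) 1, ?_⟩
  rw [S.act_single, S.act_single, RotorSystem.addAt, RotorSystem.addAt,
    S.route_eq_of_iterate_step hreturn fun j hj => by rw [hwalk j hj.le]; exact (f j).2]
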